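/- For the path-graph dynamics on N nodes with N even, there exists an extended equilibrium x* such that x*_N - x*_1 = (N-2)²/4; specifically, taking k₁ = 0 and k_i - k_{i-1} = i - 2 for i ≤ (N+2)/2 and k_i - k_{i-1} = N - i for i > (N+2)/2, the point x* defined by x*_1 = k₂, x*_i = (k_{i-1} + k_{i+1})/2 for 2 ≤ i ≤ N-1, x*_N = k_{N-1} is an extended equilibrium with x*_N - x*_1 = (N-2)²/4. -/

import Mathlib

/-!
Choose integer levels `k` whose increments `k i - k (i - 1)` rise by one up to the middle of the
path and then fall by one, a discrete tent. Placing `x` at the exact equilibrium dictated by `k`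
(the average of the neighbouring levels inside, the single neighbour's level at the ends), the
distance `x i - k i` is half the second difference of `k`, i.e. half the jump of the increments,
hence at most `1/2`; so `x` lies in the closure of the cell of `k`. The increments vanish at both
ends, and for `N = 2m` they sum to `(m - 1)²`.
-/

/-- `x` is an extended equilibrium of the path-graph dynamics with quantization
levels `k` (components indexed by 1,…,N). -/
def IsPathExtendedEquilibrium (N : ℕ) (x : ℕ → ℝ) (k : ℕ → ℤ) : Prop :=
  ((k 2 : ℝ) - x 1 = 0) ∧
  (∀ i : ℕ, 2 ≤ i → i ≤ N - 1 → (k (i - 1) : ℝ) + (k (i + 1) : ℝ) - 2 * x i = 0) ∧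
  ((k (N - 1) : ℝ) - x N = 0) ∧
  (∀ i : ℕ, 1 ≤ i → i ≤ N → (k i : ℝ) - 1/2 ≤ x i ∧ x i ≤ (k i : ℝ) + 1/2)

def tentStep (N i : ℕ) : ℤ := if 2 * i ≤ N + 2 then (i : ℤ) - 2 else (N : ℤ) - i

def tentLevel (N : ℕ) : ℕ → ℤ
  | 0 => 0
  | 1 => 0
  | i + 2 => tentLevel N (i + 1) + tentStep N (i + 2)

/-- The exact equilibrium of the path dynamics with all quantized values frozen at levels `k`. -/
noncomputable def pathPoint (N : ℕ) (k : ℕ → ℤ) (i : ℕ) : ℝ :=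
  if i = 1 then k 2 else if i = N then k (N - 1) else ((k (i - 1) : ℝ) + k (i + 1)) / 2

section pathPoint

variable {N : ℕ} {k : ℕ → ℤ}

theorem pathPoint_one : pathPoint N k 1 = k 2 := by
  simp [pathPoint]

theorem pathPoint_self (hN : 2 ≤ N) : pathPoint N k N = k (N - 1) := by
  simp [pathPoint, show N ≠ 1 by omega]

theorem pathPoint_of_mem_Icc {i : ℕ} (h2 : 2 ≤ i) (hN : i ≤ N - 1) :
    pathPoint N k i = ((k (i - 1) : ℝ) + k (i + 1)) / 2 := by
  simp [pathPoint, show i ≠ 1 by omega, show i ≠ N by omega]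

theorem isPathExtendedEquilibrium_pathPoint (hN : 2 ≤ N) (h_left : k 2 = k 1)
    (h_right : k N = k (N - 1))
    (h_second_diff : ∀ i, 2 ≤ i → i ≤ N - 1 → |k (i - 1) + k (i + 1) - 2 * k i| ≤ 1) :
    IsPathExtendedEquilibrium N (pathPoint N k) k := by
  refine ⟨by rw [pathPoint_one, sub_self], fun i h2 hi ↦ ?_, by rw [pathPoint_self hN, sub_self],
    fun i h1 hi ↦ ?_⟩
  · rw [pathPoint_of_mem_Icc h2 hi]; ring
  rcases eq_or_ne i 1 with rfl | hi1
  · rw [pathPoint_one, h_left]; constructor <;> linarith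
  rcases eq_or_ne i N with rfl | hiN
  · rw [pathPoint_self hN, h_right]; constructor <;> linarith
  have h := abs_le.mp (h_second_diff i (by omega) (by omega))
  have h_lo : (-1 : ℝ) ≤ k (i - 1) + k (i + 1) - 2 * k i := by exact_mod_cast h.1
  have h_hi : (k (i - 1) + k (i + 1) - 2 * k i : ℝ) ≤ 1 := by exact_mod_cast h.2
  rw [pathPoint_of_mem_Icc (by omega) (by omega)]
  constructor <;> linarith

end pathPoint

section tentLevel

variable {N i : ℕ}

theorem tentLevel_sub_pred (hi : 2 ≤ i) : tentLevel N i - tentLevel N (i - 1) = tentStep N i := by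
  obtain ⟨j, rfl⟩ : ∃ j, i = j + 2 := ⟨i - 2, by omega⟩
  simp [tentLevel]

theorem tentLevel_one : tentLevel N 1 = 0 := rfl

theorem tentLevel_two (hN : 2 ≤ N) : tentLevel N 2 = 0 := by
  simp [tentLevel, tentStep, hN]

theorem tentLevel_self (hN : 3 ≤ N) : tentLevel N N = tentLevel N (N - 1) := by
  have h := tentLevel_sub_pred (N := N) (i := N) (by omega)
  simp only [tentStep, if_neg (show ¬2 * N ≤ N + 2 by omega), sub_self] at h
  linarith

theorem abs_tentStep_succ_sub_le : |tentStep N (i + 1) - tentStep N i| ≤ 1 := by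
  unfold tentStep
  split_ifs <;> push_cast <;> rw [abs_le] <;> constructor <;> omega

theorem abs_tentLevel_second_diff_le (hi : 2 ≤ i) :
    |tentLevel N (i - 1) + tentLevel N (i + 1) - 2 * tentLevel N i| ≤ 1 := by
  have h := tentLevel_sub_pred (N := N) (i := i + 1) (by omega)
  rw [Nat.add_sub_cancel] at h
  calc |tentLevel N (i - 1) + tentLevel N (i + 1) - 2 * tentLevel N i|
      = |tentStep N (i + 1) - tentStep N i| := by rw [← h, ← tentLevel_sub_pred hi]; ring_nf
    _ ≤ 1 := abs_tentStep_succ_sub_le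

theorem two_mul_tentLevel_of_le (h1 : 1 ≤ i) (hi : 2 * i ≤ N + 2) :
    2 * tentLevel N i = ((i : ℤ) - 1) * ((i : ℤ) - 2) := by
  induction i, h1 using Nat.le_induction with
  | base => rfl
  | succ n hn ih =>
    have h := tentLevel_sub_pred (N := N) (i := n + 1) (by omega)
    rw [tentStep, if_pos hi, Nat.add_sub_cancel] at h
    push_cast at h ⊢
    linear_combination ih (by omega) + 2 * h

theorem four_mul_tentLevel_of_ge {m : ℕ} (hm : N = m + m) (hi : m + 1 ≤ i) (hiN : i ≤ N) :
    4 * tentLevel N i = ((N : ℤ) - 2) ^ 2 - 2 * ((N : ℤ) - i - 1) * ((N : ℤ) - i) := by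
  induction i, hi using Nat.le_induction with
  | base =>
    have h := two_mul_tentLevel_of_le (N := N) (i := m + 1) (by omega) (by omega)
    subst hm
    push_cast at h ⊢
    linear_combination 2 * h
  | succ n hn ih =>
    have h := tentLevel_sub_pred (N := N) (i := n + 1) (by omega)
    rw [tentStep, if_neg (by omega), Nat.add_sub_cancel] at h
    push_cast at h ⊢
    linear_combination ih (by omega) + 4 * h

theorem four_mul_tentLevel_sub_one {m : ℕ} (hm : N = m + m) (hN : 4 ≤ N) :
    4 * tentLevel N (N - 1) = ((N : ℤ) - 2) ^ 2 := by
  rw [four_mul_tentLevel_of_ge hm (by omega) (by omega), Nat.cast_sub (by omega)]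
  ring

end tentLevel

theorem path_equilibrium_achieving_bound (N : ℕ) (hN : 4 ≤ N) (hNe : Even N) :
    ∃ (k : ℕ → ℤ) (x : ℕ → ℝ),
      k 1 = 0 ∧
      (∀ i : ℕ, 2 ≤ i → i ≤ N →
        k i - k (i - 1) = if 2 * i ≤ N + 2 then (i : ℤ) - 2 else (N : ℤ) - i) ∧
      x 1 = (k 2 : ℝ) ∧
      (∀ i : ℕ, 2 ≤ i → i ≤ N - 1 → x i = ((k (i - 1) : ℝ) + (k (i + 1) : ℝ)) / 2) ∧
      x N = (k (N - 1) : ℝ) ∧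
      IsPathExtendedEquilibrium N x k ∧
      x N - x 1 = ((N : ℝ) - 2) ^ 2 / 4 := by
  obtain ⟨m, hm⟩ := hNe
  have h_span : (4 : ℝ) * tentLevel N (N - 1) = ((N : ℝ) - 2) ^ 2 := by
    exact_mod_cast four_mul_tentLevel_sub_one hm hN
  refine ⟨tentLevel N, pathPoint N (tentLevel N), tentLevel_one,
    fun i hi _ ↦ tentLevel_sub_pred hi, pathPoint_one,
    fun i h2 hi ↦ pathPoint_of_mem_Icc h2 hi, pathPoint_self (by omega),
    isPathExtendedEquilibrium_pathPoint (by omega) (by rw [tentLevel_two (by omega), tentLevel_one])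
      (tentLevel_self (by omega)) fun i hi _ ↦ abs_tentLevel_second_diff_le hi, ?_⟩
  rw [pathPoint_self (by omega), pathPoint_one, tentLevel_two (by omega)]
  push_cast
  linarith
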